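/- Let G be a finite abelian group with smallest prime divisor p of |G|, and let T be a nonempty sequence over G ∖ {0}. If |T| ≤ p − 1, then |Σ₀(T)| ≥ |T| + 1. -/
import Mathlib


/-- The set of sums over nonempty subsequences (sub-multisets) of the sequence `S`. -/
def seqSums {G : Type*} [AddCommGroup G] (S : Multiset G) : Set G :=
  {x | ∃ T : Multiset G, T ≤ S ∧ T ≠ 0 ∧ T.sum = x}

/-- `seqSums S` together with `0`. -/
def seqSums0 {G : Type*} [AddCommGroup G] (S : Multiset G) : Set G :=
  seqSums S ∪ {0}

open Classical in
/-- A sequence `S` over `G` is regular if for every proper subgroup `H ⊊ G`,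
at most `|H| - 1` terms of `S` (counted with multiplicity) lie in `H`. -/
def IsRegularSeq {G : Type*} [AddCommGroup G] (S : Multiset G) : Prop :=
  ∀ H : AddSubgroup G, H ≠ ⊤ →
    Multiset.card (S.filter (fun g => g ∈ H)) ≤ Nat.card H - 1

/-- The Davenport constant: the smallest `t` such that every sequence over `G` of length
at least `t` contains a nonempty zero-sum subsequence. -/
noncomputable def davenport (G : Type*) [AddCommGroup G] : ℕ :=
  sInf {t : ℕ | ∀ S : Multiset G, t ≤ Multiset.card S →
    ∃ T : Multiset G, T ≤ S ∧ T ≠ 0 ∧ T.sum = 0}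

/-- The set of sums over nonempty subsets of the finite set `S`. -/
def setSums {G : Type*} [AddCommGroup G] (S : Finset G) : Set G :=
  {x | ∃ T : Finset G, T ⊆ S ∧ T.Nonempty ∧ (∑ g ∈ T, g) = x}

/-- `setSums S` together with `0`. -/
def setSums0 {G : Type*} [AddCommGroup G] (S : Finset G) : Set G :=
  setSums S ∪ {0}


private lemma zero_mem_seqSums0 {G : Type*} [AddCommGroup G] (S : Multiset G) :
    (0 : G) ∈ seqSums0 S := Or.inr rfl

private lemma seqSums0_cons_subset {G : Type*} [AddCommGroup G] (a : G) (s : Multiset G) :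
    seqSums0 s ⊆ seqSums0 (a ::ₘ s) := by
  rintro x (⟨U, hU, hUne, hsum⟩ | hx)
  · exact Or.inl ⟨U, le_trans hU (Multiset.le_cons_self s a), hUne, hsum⟩
  · exact Or.inr hx

private lemma add_mem_seqSums0_cons {G : Type*} [AddCommGroup G] (a : G) (s : Multiset G)
    {x : G} (hx : x ∈ seqSums0 s) : x + a ∈ seqSums0 (a ::ₘ s) := by
  rcases hx with ⟨U, hU, hUne, hsum⟩ | hx
  · refine Or.inl ⟨a ::ₘ U, Multiset.cons_le_cons a hU, Multiset.cons_ne_zero, ?_⟩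
    rw [Multiset.sum_cons, ← hsum, add_comm]
  · refine Or.inl ⟨{a}, ?_, by simp, ?_⟩
    · simpa using Multiset.cons_le_cons a (Multiset.zero_le s)
    · simp [Set.mem_singleton_iff.mp hx]

private lemma minFac_le_addOrderOf {G : Type*} [AddCommGroup G] [Finite G]
    (h1 : 1 < Nat.card G) {a : G} (ha : a ≠ 0) :
    (Nat.card G).minFac ≤ addOrderOf a := by
  have hdvd : addOrderOf a ∣ Nat.card G := addOrderOf_dvd_natCard a
  have hpos : 0 < addOrderOf a := addOrderOf_pos a
  have hne1 : addOrderOf a ≠ 1 := by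
    simpa [AddMonoid.addOrderOf_eq_one_iff] using ha
  have hprime : (addOrderOf a).minFac.Prime := Nat.minFac_prime hne1
  calc (Nat.card G).minFac ≤ (addOrderOf a).minFac :=
        Nat.minFac_le_of_dvd hprime.two_le ((addOrderOf a).minFac_dvd.trans hdvd)
    _ ≤ addOrderOf a := Nat.minFac_le hpos

private lemma sums_lower_bound_aux {G : Type*} [AddCommGroup G] [Finite G]
    (h1 : 1 < Nat.card G) (p : ℕ) (hp : p = (Nat.card G).minFac) :
    ∀ T : Multiset G, (∀ g ∈ T, g ≠ (0 : G)) → Multiset.card T ≤ p - 1 →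
      Multiset.card T + 1 ≤ Nat.card (seqSums0 T) := by
  have hp2 : 2 ≤ p := hp ▸ (Nat.minFac_prime (by omega)).two_le
  intro T
  induction T using Multiset.induction_on with
  | empty =>
    intro _ _
    have : seqSums0 (0 : Multiset G) = {0} := by
      ext x
      constructor
      · rintro (⟨U, hU, hUne, _⟩ | hx)
        · exact absurd (Multiset.le_zero.mp hU) hUne
        · exact hx
      · rintro rfl; exact Or.inr rfl
    simp [this]
  | cons a s ih =>
    intro h0 hlen
    have ha : a ≠ 0 := h0 a (Multiset.mem_cons_self a s)
    have ihs := ih (fun g hg => h0 g (Multiset.mem_cons_of_mem hg))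
      (le_trans (by simp) hlen)
    have hfin : (seqSums0 (a ::ₘ s)).Finite := Set.toFinite _
    have hfins : (seqSums0 s).Finite := Set.toFinite _
    rw [Nat.card_coe_set_eq] at ihs ⊢
    by_cases hsub : seqSums0 (a ::ₘ s) ⊆ seqSums0 s
    · -- everything stays in seqSums0 s; then all multiples of a are in it
      have hmul : ∀ k : ℕ, k • a ∈ seqSums0 s := by
        intro k
        induction k with
        | zero => simpa using zero_mem_seqSums0 s
        | succ k ihk =>
          have := add_mem_seqSums0_cons a s ihk
          rw [succ_nsmul]
          exact hsub this
      have hsubset : (fun k : ℕ => k • a) '' Set.Iio (addOrderOf a) ⊆ seqSums0 (a ::ₘ s) := by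
        rintro x ⟨k, _, rfl⟩
        exact seqSums0_cons_subset a s (hmul k)
      have hinj : Set.InjOn (fun k : ℕ => k • a) (Set.Iio (addOrderOf a)) :=
        nsmul_injOn_Iio_addOrderOf
      have hcard : ((fun k : ℕ => k • a) '' Set.Iio (addOrderOf a)).ncard = addOrderOf a := by
        rw [Set.ncard_image_of_injOn hinj, ← Nat.card_coe_set_eq]
        simp
      have h1' : addOrderOf a ≤ (seqSums0 (a ::ₘ s)).ncard := by
        rw [← hcard]
        exact Set.ncard_le_ncard hsubset hfin
      have h2' : p ≤ addOrderOf a := hp ▸ minFac_le_addOrderOf h1 ha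
      have : Multiset.card (a ::ₘ s) + 1 ≤ p := by
        rw [Multiset.card_cons] at hlen ⊢
        omega
      omega
    · obtain ⟨x, hx, hxs⟩ := Set.not_subset.mp hsub
      have hins : insert x (seqSums0 s) ⊆ seqSums0 (a ::ₘ s) := by
        rintro y (rfl | hy)
        · exact hx
        · exact seqSums0_cons_subset a s hy
      have hcard : (insert x (seqSums0 s)).ncard = (seqSums0 s).ncard + 1 :=
        Set.ncard_insert_of_notMem hxs hfins
      have := Set.ncard_le_ncard hins hfin
      rw [Multiset.card_cons]
      omega

/-- If `T` is a nonempty sequence over `G \ {0}` with `|T| ≤ p - 1`,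
where `p` is the smallest prime divisor of `|G|`, then `|Σ₀(T)| ≥ |T| + 1`. -/
theorem sums_lower_bound_short (G : Type*) [AddCommGroup G] [Finite G]
    (h1 : 1 < Nat.card G) (p : ℕ) (hp : p = (Nat.card G).minFac)
    (T : Multiset G) (hT0 : ∀ g ∈ T, g ≠ (0 : G)) (hTne : T ≠ 0)
    (hlen : Multiset.card T ≤ p - 1) :
    Multiset.card T + 1 ≤ Nat.card (seqSums0 T) := by
  exact sums_lower_bound_aux h1 p hp T hT0 hlen
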